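/- arXiv:0808.1550 — 6 statements merged into one kernel-verified Lean document; each statement's English description precedes it below -/
import Mathlib

section
/- Descent for Markov triples: if (a,b,c) is a Markov triple with c ≥ a, c ≥ b and (a,b,c) ≠ (1,1,1), then the mutation c' = 3ab − c satisfies 0 < c' < c. -/
/-- Descent for Markov triples: if `c` is maximal and the triple is not `(1,1,1)`,
then the mutation `c' = 3ab − c` satisfies `0 < c' < c`. -/
theorem markov_descent (a b c : ℤ) (ha : 0 < a) (hb : 0 < b) (hc : 0 < c)
    (h : a ^ 2 + b ^ 2 + c ^ 2 = 3 * a * b * c)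
    (hca : a ≤ c) (hcb : b ≤ c) (hne : (a, b, c) ≠ (1, 1, 1)) :
    0 < 3 * a * b - c ∧ 3 * a * b - c < c := by
  have key : c * (3 * a * b - c) = a ^ 2 + b ^ 2 := by linear_combination -h
  have hpos : 0 < 3 * a * b - c := by
    by_contra hle
    push_neg at hle
    nlinarith [mul_pos ha ha, mul_pos hb hb, mul_nonpos_of_nonneg_of_nonpos hc.le hle]
  refine ⟨hpos, ?_⟩
  by_contra h2
  push_neg at h2
  have f1 : (c - a) * (3 * a * b - c - a) ≥ 0 :=
    mul_nonneg (by linarith) (by linarith)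
  have f2 : (c - b) * (3 * a * b - c - b) ≥ 0 :=
    mul_nonneg (by linarith) (by linarith)
  have g1 : 2 * a ^ 2 + b ^ 2 - 3 * a ^ 2 * b ≥ 0 := by nlinarith [key]
  have g2 : a ^ 2 + 2 * b ^ 2 - 3 * a * b ^ 2 ≥ 0 := by nlinarith [key]
  have hb1 : b = 1 := by nlinarith [mul_pos ha hb, mul_pos ha ha, mul_pos hb hb]
  have ha1 : a = 1 := by nlinarith
  subst ha1; subst hb1
  have hc12 : (c - 1) * (c - 2) = 0 := by linear_combination h
  rcases mul_eq_zero.mp hc12 with h' | h'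
  · exact hne (by simp [show c = 1 by linarith])
  · have : c = 2 := by linarith
    omega
end

section
/- If (a,b,c) is a triple of positive integers satisfying a² + b² + 2c² = 4abc, then a, b, and c are all odd. -/
lemma key8 : ∀ x y z : ZMod 8, x^2+y^2+2*z^2 = 0 →
    x.val % 2 = 0 ∧ y.val % 2 = 0 ∧ z.val % 2 = 0 := by decide

lemma key4 : ∀ x y z : ZMod 4, x^2+y^2+2*z^2 = 0 →
    (x.val % 2 = 1 ∧ y.val % 2 = 1 ∧ z.val % 2 = 1) ∨
    (x.val % 2 = 0 ∧ y.val % 2 = 0 ∧ z.val % 2 = 0) := by decide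

lemma mod2_of_zmod8 (a : ℕ) : ((a : ZMod 8)).val % 2 = a % 2 := by
  rw [ZMod.val_natCast]
  exact Nat.mod_mod_of_dvd a (by norm_num)

lemma mod2_of_zmod4 (a : ℕ) : ((a : ZMod 4)).val % 2 = a % 2 := by
  rw [ZMod.val_natCast]
  exact Nat.mod_mod_of_dvd a (by norm_num)

lemma noSol : ∀ a b c k : ℕ, 0 < a → 0 < b → 0 < c →
    a^2 + b^2 + 2*c^2 = 2^(k+3) * (a*b*c) → False := by
  intro a
  induction a using Nat.strong_induction_on with
  | _ a ih =>
    intro b c k ha hb hc h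
    have hz : ((a : ZMod 8))^2 + (b:ZMod 8)^2 + 2*(c:ZMod 8)^2 = 0 := by
      have := congrArg (Nat.cast : ℕ → ZMod 8) h
      push_cast at this
      have h8 : (2:ZMod 8)^(k+3) = 0 := by
        rw [pow_add, show (2:ZMod 8)^3 = 0 by decide, mul_zero]
      rw [this, h8, zero_mul]
    obtain ⟨h1, h2, h3⟩ := key8 _ _ _ hz
    rw [mod2_of_zmod8] at h1 h2 h3
    obtain ⟨a₁, rfl⟩ : ∃ x, a = 2*x := ⟨a/2, by omega⟩
    obtain ⟨b₁, rfl⟩ : ∃ x, b = 2*x := ⟨b/2, by omega⟩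
    obtain ⟨c₁, rfl⟩ : ∃ x, c = 2*x := ⟨c/2, by omega⟩
    have ha1 : 0 < a₁ := by omega
    have heq : a₁^2 + b₁^2 + 2*c₁^2 = 2^(k+1+3) * (a₁*b₁*c₁) := by
      have h4 : 4*(a₁^2 + b₁^2 + 2*c₁^2) = 4*(2^(k+1+3) * (a₁*b₁*c₁)) := by
        rw [show k+1+3 = (k+3)+1 from rfl, pow_succ] at *
        ring_nf at h ⊢
        linarith
      omega
    exact ih a₁ (by omega) b₁ c₁ (k+1) ha1 (by omega) (by omega) heq

/-- Every positive solution of `a² + b² + 2c² = 4abc` has all entries odd. -/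
theorem markov_type_deg8_odd (a b c : ℕ) (ha : 0 < a) (hb : 0 < b) (hc : 0 < c)
    (h : a ^ 2 + b ^ 2 + 2 * c ^ 2 = 4 * a * b * c) :
    Odd a ∧ Odd b ∧ Odd c := by
  have hz : ((a : ZMod 4))^2 + (b:ZMod 4)^2 + 2*(c:ZMod 4)^2 = 0 := by
    have := congrArg (Nat.cast : ℕ → ZMod 4) h
    push_cast at this
    rw [this]
    have : (4 : ZMod 4) = 0 := by decide
    rw [show ((4:ZMod 4)*a*b*c) = 4*(a*b*c) by ring, this, zero_mul]
  rcases key4 _ _ _ hz with ⟨h1, h2, h3⟩ | ⟨h1, h2, h3⟩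
  · rw [mod2_of_zmod4] at h1 h2 h3
    exact ⟨Nat.odd_iff.mpr h1, Nat.odd_iff.mpr h2, Nat.odd_iff.mpr h3⟩
  · exfalso
    rw [mod2_of_zmod4] at h1 h2 h3
    obtain ⟨a₁, rfl⟩ : ∃ x, a = 2*x := ⟨a/2, by omega⟩
    obtain ⟨b₁, rfl⟩ : ∃ x, b = 2*x := ⟨b/2, by omega⟩
    obtain ⟨c₁, rfl⟩ : ∃ x, c = 2*x := ⟨c/2, by omega⟩
    have heq : a₁^2 + b₁^2 + 2*c₁^2 = 2^(0+3) * (a₁*b₁*c₁) := by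
      have h4 : 4*(a₁^2 + b₁^2 + 2*c₁^2) = 4*(2^(0+3) * (a₁*b₁*c₁)) := by
        norm_num
        ring_nf at h ⊢
        linarith
      omega
    exact noSol a₁ b₁ c₁ 0 (by omega) (by omega) (by omega) heq
end

section
/- Every triple (n₀,n₁,n₂) of positive integers satisfying n₀² + 2n₁² + 8n₂² = 4n₀n₁n₂ has n₀ divisible by 4 and n₁ divisible by 2; consequently 8 divides gcd(n₀², 2n₁², 8n₂²). -/
/-- Every positive solution of `n₀² + 2n₁² + 8n₂² = 4n₀n₁n₂` has `4 ∣ n₀` and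
`2 ∣ n₁`; consequently `8` divides `gcd(n₀², 2n₁², 8n₂²)`. -/
theorem markov_type_deg1_divisibility (n₀ n₁ n₂ : ℕ)
    (h₀ : 0 < n₀) (h₁ : 0 < n₁) (h₂ : 0 < n₂)
    (h : n₀ ^ 2 + 2 * n₁ ^ 2 + 8 * n₂ ^ 2 = 4 * n₀ * n₁ * n₂) :
    4 ∣ n₀ ∧ 2 ∣ n₁ ∧ 8 ∣ Nat.gcd (n₀ ^ 2) (Nat.gcd (2 * n₁ ^ 2) (8 * n₂ ^ 2)) := by
  obtain ⟨a, rfl⟩ : 2 ∣ n₀ := by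
    refine Nat.Prime.dvd_of_dvd_pow (p := 2) (n := 2) Nat.prime_two ?_
    refine ⟨2 * (n₀ * n₁ * n₂) - n₁ ^ 2 - 4 * n₂ ^ 2, ?_⟩
    have h' : n₀ ^ 2 + 2 * n₁ ^ 2 + 8 * n₂ ^ 2 = 4 * (n₀ * n₁ * n₂) := by
      rw [h]; ring
    omega
  obtain ⟨b, rfl⟩ : 2 ∣ n₁ := by
    refine Nat.Prime.dvd_of_dvd_pow (p := 2) (n := 2) Nat.prime_two ?_
    refine ⟨2 * (a * n₁ * n₂) - a ^ 2 - 2 * n₂ ^ 2, ?_⟩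
    have h' : 2 * a ^ 2 + n₁ ^ 2 + 4 * n₂ ^ 2 = 4 * (a * n₁ * n₂) := by
      nlinarith [h]
    omega
  obtain ⟨c, rfl⟩ : 2 ∣ a := by
    refine Nat.Prime.dvd_of_dvd_pow (p := 2) (n := 2) Nat.prime_two ?_
    refine ⟨2 * (a * b * n₂) - b ^ 2 - n₂ ^ 2, ?_⟩
    have h' : a ^ 2 + 2 * b ^ 2 + 2 * n₂ ^ 2 = 4 * (a * b * n₂) := by
      nlinarith [h]
    omega
  refine ⟨⟨c, by ring⟩, ⟨b, rfl⟩, ?_⟩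
  refine Nat.dvd_gcd ⟨2 * c ^ 2, by ring⟩ (Nat.dvd_gcd ⟨b ^ 2, by ring⟩ ⟨n₂ ^ 2, by ring⟩)
end

section
/- The triples (d₀,d₁,d₂) of positive integers with d₀ ≤ d₁ ≤ d₂ such that (12 − d₀ − d₁ − d₂)·d₀d₁d₂ is a positive perfect square are exactly the following fourteen: (1,1,1), (1,1,2), (1,2,3), (1,1,5), (2,2,4), (3,3,3), (1,2,6), (1,1,8), (2,4,4), (1,3,6), (1,1,9), (1,2,8), (2,3,6), (1,5,5). -/
set_option maxRecDepth 40000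

lemma sq_exists_iff_bounded (N : ℕ) (hN : N ≤ 432) :
    (∃ k : ℕ, 0 < k ∧ N = k ^ 2) ↔ (∃ k < 22, 0 < k ∧ N = k ^ 2) := by
  constructor
  · rintro ⟨k, hk, rfl⟩
    refine ⟨k, ?_, hk, rfl⟩
    by_contra h
    push_neg at h
    nlinarith
  · rintro ⟨k, _, hk, he⟩
    exact ⟨k, hk, he⟩

/-- The classification of triples `d₀ ≤ d₁ ≤ d₂` of positive integers such that
`(12 − d₀ − d₁ − d₂)·d₀d₁d₂` is a positive perfect square. -/
theorem toric_d_classification (d₀ d₁ d₂ : ℕ) (h₀ : 0 < d₀)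
    (h01 : d₀ ≤ d₁) (h12 : d₁ ≤ d₂) :
    (d₀ + d₁ + d₂ < 12 ∧
      ∃ k : ℕ, 0 < k ∧ (12 - (d₀ + d₁ + d₂)) * (d₀ * d₁ * d₂) = k ^ 2) ↔
    (d₀, d₁, d₂) ∈ [(1,1,1), (1,1,2), (1,2,3), (1,1,5), (2,2,4), (3,3,3), (1,2,6),
      (1,1,8), (2,4,4), (1,3,6), (1,1,9), (1,2,8), (2,3,6), (1,5,5)] := by
  constructor
  · rintro ⟨hs, hE⟩
    have hb : d₂ ≤ 9 := by omega
    have h1 : 1 ≤ d₁ := le_trans h₀ h01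
    have hb0 : d₀ ≤ 3 := by omega
    have hb1 : d₁ ≤ 5 := by omega
    interval_cases d₀ <;> interval_cases d₁ <;> interval_cases d₂ <;>
      (rw [sq_exists_iff_bounded _ (by norm_num)] at hE; revert hE; decide)
  · intro h
    fin_cases h <;>
      exact ⟨by norm_num, by rw [sq_exists_iff_bounded _ (by norm_num)]; decide⟩
end

section
/- If [b₁,…,b_r] = n/a as a Hirzebruch–Jung continued fraction (with all b_i ≥ 2, gcd(a,n)=1, 0 < a < n), then the reversed string satisfies [b_r,…,b₁] = n/a′, where a′ is the unique integer with 0 < a′ < n and a·a′ ≡ 1 (mod n). -/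
/-!
Write `A_b = !![b, -1; 1, 0]` and `M = A_{b₁} ⋯ A_{b_r} = !![p, q; r, s]`. Then
`[b₁,…,b_r] = p / r` with `0 < r < p`, and `det M = ps - qr = 1` makes `p / r` reduced, so
`p = n` and `r = a`. Since `A_bᵀ = J A_b J` for `J = diag(1, -1)`, the reversed string has
matrix `J Mᵀ J`, whose first column is `(p, -q)`; hence `[b_r,…,b₁] = n / (-q)`. Finally
`a · (-q) = 1 - n s ≡ 1 (mod n)` and `0 < -q < n`, so `-q = a′`.
-/

/-- The Hirzebruch–Jung continued fraction `[b₁,…,b_r] = b₁ − 1/(b₂ − 1/(⋯ − 1/b_r))`,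
evaluated in `ℚ` (using the convention `1/0 = 0`, so `hj [b] = b`). -/
def hj : List ℕ → ℚ
  | [] => 0
  | b :: l => (b : ℚ) - 1 / hj l

/-- `hj l = hjMatrix l 0 0 / hjMatrix l 1 0`, since `!![b, -1; 1, 0]` is the matrix of the
Möbius map `x ↦ b - 1/x`. -/
def hjMatrix (l : List ℕ) : Matrix (Fin 2) (Fin 2) ℤ :=
  (l.map fun b : ℕ => !![(b : ℤ), -1; 1, 0]).prod

namespace hjMatrix

open Matrix

@[simp]
lemma nil : hjMatrix [] = 1 := rfl

lemma cons (b : ℕ) (l : List ℕ) :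
    hjMatrix (b :: l) = !![(b : ℤ), -1; 1, 0] * hjMatrix l := rfl

lemma append (l m : List ℕ) : hjMatrix (l ++ m) = hjMatrix l * hjMatrix m := by
  simp [hjMatrix]

@[simp]
lemma cons_apply_one_zero (b : ℕ) (l : List ℕ) : hjMatrix (b :: l) 1 0 = hjMatrix l 0 0 := by
  simp [cons, mul_apply, Fin.sum_univ_two]

@[simp]
lemma cons_apply_zero_zero (b : ℕ) (l : List ℕ) :
    hjMatrix (b :: l) 0 0 = b * hjMatrix l 0 0 - hjMatrix l 1 0 := by
  simp [cons, mul_apply, Fin.sum_univ_two, sub_eq_add_neg]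

lemma det (l : List ℕ) : (hjMatrix l).det = 1 := by
  induction l with
  | nil => simp
  | cons b l ih => rw [cons, det_mul, ih, det_fin_two_of]; ring

lemma isCoprime (l : List ℕ) : IsCoprime (hjMatrix l 0 0) (hjMatrix l 1 0) := by
  have h := det l
  rw [det_fin_two] at h
  exact ⟨hjMatrix l 1 1, -hjMatrix l 0 1, by linear_combination h⟩

lemma reverse (l : List ℕ) :
    hjMatrix l.reverse = !![1, 0; 0, -1] * (hjMatrix l)ᵀ * !![1, 0; 0, -1] := by
  induction l with
  | nil => ext i j; fin_cases i <;> fin_cases j <;> rfl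
  | cons b l ih =>
    have hJ : !![(1 : ℤ), 0; 0, -1] * !![1, 0; 0, -1] = 1 := by
      ext i j; fin_cases i <;> fin_cases j <;> rfl
    have hA : !![(b : ℤ), -1; 1, 0] =
        !![1, 0; 0, -1] * !![(b : ℤ), -1; 1, 0]ᵀ * !![1, 0; 0, -1] := by
      ext i j
      fin_cases i <;> fin_cases j <;> simp only [mul_apply, Fin.sum_univ_two, transpose_apply] <;>
        simp
    calc hjMatrix (b :: l).reverse
        = (!![1, 0; 0, -1] * (hjMatrix l)ᵀ * !![1, 0; 0, -1]) * !![(b : ℤ), -1; 1, 0] := by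
          rw [List.reverse_cons, append, ih]; simp [hjMatrix]
      _ = !![1, 0; 0, -1] * (hjMatrix l)ᵀ * (!![1, 0; 0, -1] * !![1, 0; 0, -1]) *
            !![(b : ℤ), -1; 1, 0]ᵀ * !![1, 0; 0, -1] := by
          conv_lhs => rw [hA]
          simp only [Matrix.mul_assoc]
      _ = !![1, 0; 0, -1] * (hjMatrix (b :: l))ᵀ * !![1, 0; 0, -1] := by
          rw [hJ, cons, transpose_mul]; simp only [Matrix.mul_one, Matrix.mul_assoc]

@[simp]
lemma reverse_apply_zero_zero (l : List ℕ) : hjMatrix l.reverse 0 0 = hjMatrix l 0 0 := by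
  rw [reverse]; simp only [mul_apply, Fin.sum_univ_two, transpose_apply]; simp

@[simp]
lemma reverse_apply_one_zero (l : List ℕ) : hjMatrix l.reverse 1 0 = -hjMatrix l 0 1 := by
  rw [reverse]; simp only [mul_apply, Fin.sum_univ_two, transpose_apply]; simp

variable {l : List ℕ}

lemma apply_one_zero_mem_Ico (hl : ∀ b ∈ l, 2 ≤ b) :
    hjMatrix l 1 0 ∈ Set.Ico 0 (hjMatrix l 0 0) := by
  induction l with
  | nil => simp
  | cons b l ih =>
    have hb : (2 : ℤ) ≤ b := by exact_mod_cast hl b List.mem_cons_self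
    obtain ⟨h0, h1⟩ := ih fun x hx => hl x (List.mem_cons_of_mem b hx)
    rw [cons_apply_one_zero, cons_apply_zero_zero]
    constructor <;> nlinarith

lemma apply_zero_zero_pos (hl : ∀ b ∈ l, 2 ≤ b) : 0 < hjMatrix l 0 0 :=
  (apply_one_zero_mem_Ico hl).1.trans_lt (apply_one_zero_mem_Ico hl).2

lemma apply_one_zero_pos (hl : ∀ b ∈ l, 2 ≤ b) (hne : l ≠ []) : 0 < hjMatrix l 1 0 := by
  obtain ⟨b, l, rfl⟩ := List.exists_cons_of_ne_nil hne
  rw [cons_apply_one_zero]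
  exact apply_zero_zero_pos fun x hx => hl x (List.mem_cons_of_mem b hx)

end hjMatrix

/-- For `l = []` this reads `0 = 1 / 0`, which holds with Lean's division. -/
lemma hj_eq_div_hjMatrix {l : List ℕ} (hl : ∀ b ∈ l, 2 ≤ b) :
    hj l = hjMatrix l 0 0 / hjMatrix l 1 0 := by
  induction l with
  | nil => simp [hj]
  | cons b l ih =>
    have hl' : ∀ x ∈ l, 2 ≤ x := fun x hx => hl x (List.mem_cons_of_mem b hx)
    have hp : (hjMatrix l 0 0 : ℚ) ≠ 0 := by
      exact_mod_cast (hjMatrix.apply_zero_zero_pos hl').ne'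
    rw [hj, ih hl', one_div_div, hjMatrix.cons_apply_one_zero, hjMatrix.cons_apply_zero_zero]
    push_cast
    field_simp

lemma Int.eq_of_mul_modEq_one {a x y n : ℤ} (hx : a * x ≡ 1 [ZMOD n]) (hy : a * y ≡ 1 [ZMOD n])
    (hx0 : 0 ≤ x) (hxn : x < n) (hy0 : 0 ≤ y) (hyn : y < n) : x = y := by
  have h : x ≡ y [ZMOD n] :=
    calc x = x * 1 := (mul_one x).symm
      _ ≡ x * (a * y) [ZMOD n] := (hy.mul_left x).symm
      _ = a * x * y := by ring
      _ ≡ 1 * y [ZMOD n] := hx.mul_right y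
      _ = y := one_mul y
  rwa [Int.ModEq, Int.emod_eq_of_lt hx0 hxn, Int.emod_eq_of_lt hy0 hyn] at h

theorem hj_reverse_general (B : List ℕ) (n a a' : ℕ)
    (hB : ∀ x ∈ B, 2 ≤ x) (hBne : B ≠ [])
    (ha : 0 < a) (hcop : Nat.gcd a n = 1)
    (h1 : hj B = (n : ℚ) / a)
    (ha' : 0 < a') (ha'n : a' < n) (hinv : a * a' ≡ 1 [MOD n]) :
    hj B.reverse = (n : ℚ) / a' := by
  have hBr : ∀ x ∈ B.reverse, 2 ≤ x := by simpa using hB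
  obtain ⟨hn, hr⟩ : hjMatrix B 0 0 = n ∧ hjMatrix B 1 0 = a :=
    Rat.div_int_inj (hjMatrix.apply_one_zero_pos hB hBne) (by exact_mod_cast ha)
      (Int.isCoprime_iff_gcd_eq_one.mp (hjMatrix.isCoprime B))
      (by simpa [Nat.coprime_comm] using hcop)
      (by rw [← hj_eq_div_hjMatrix hB, h1, Int.cast_natCast, Int.cast_natCast])
  have hq : -hjMatrix B 0 1 = a' := by
    have hdet := hjMatrix.det B
    rw [Matrix.det_fin_two, hn, hr] at hdet
    have hbounds := hjMatrix.apply_one_zero_mem_Ico hBr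
    rw [hjMatrix.reverse_apply_one_zero, hjMatrix.reverse_apply_zero_zero, hn] at hbounds
    refine Int.eq_of_mul_modEq_one (a := a) (n := n) ?_ ?_ hbounds.1 hbounds.2 (by omega)
      (by exact_mod_cast ha'n)
    · exact Int.modEq_iff_dvd.mpr ⟨hjMatrix B 1 1, by linear_combination -hdet⟩
    · exact_mod_cast Int.natCast_modEq_iff.mpr hinv
  rw [hj_eq_div_hjMatrix hBr, hjMatrix.reverse_apply_zero_zero, hjMatrix.reverse_apply_one_zero,
    hn, hq, Int.cast_natCast, Int.cast_natCast]

/-- If `[b₁,…,b_r] = n/a`, then the reversed string satisfies `[b_r,…,b₁] = n/a′`,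
where `a′` is the inverse of `a` modulo `n` with `0 < a′ < n`. -/
theorem hj_reverse (B : List ℕ) (n a a' : ℕ)
    (hB : ∀ x ∈ B, 2 ≤ x) (hBne : B ≠ [])
    (ha : 0 < a) (han : a < n) (hcop : Nat.gcd a n = 1)
    (h1 : hj B = (n : ℚ) / a)
    (ha' : 0 < a') (ha'n : a' < n) (hinv : a * a' ≡ 1 [MOD n]) :
    hj B.reverse = (n : ℚ) / a' :=
  hj_reverse_general B n a a' hB hBne ha hcop h1 ha' ha'n hinv
end

section
/- Equivalence of mutation-connectedness for the equation a² + b² + 2c² = 4abc: every positive integer solution is obtained from the minimal solution (1,1,1) by a finite sequence of mutations, where a mutation replaces a by 4bc − a, or b by 4ac − b, or c by 2ab − c. -/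
/-- One mutation step for the equation `a² + b² + 2c² = 4abc`: replace
`a` by `4bc − a`, or `b` by `4ac − b`, or `c` by `2ab − c`. -/
def Deg8Mutation : ℤ × ℤ × ℤ → ℤ × ℤ × ℤ → Prop := fun p q =>
  q = (4 * p.2.1 * p.2.2 - p.1, p.2.1, p.2.2) ∨
  q = (p.1, 4 * p.1 * p.2.2 - p.2.1, p.2.2) ∨
  q = (p.1, p.2.1, 2 * p.1 * p.2.1 - p.2.2)

lemma deg8_caseA (a b c : ℤ) (ha : 0 < a) (hb : 0 < b) (hc : 0 < c)
    (h : a ^ 2 + b ^ 2 + 2 * c ^ 2 = 4 * a * b * c)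
    (h1 : 2 * c ^ 2 ≤ a ^ 2) (h2 : b ≤ a) (hA : a ≤ 2 * b * c) : False := by
  have hb2 : b ^ 2 ≤ a ^ 2 := by nlinarith
  have k0 : 0 ≤ (3 * a - 4 * b * c) * a := by nlinarith
  have k1 : 0 ≤ 3 * a - 4 * b * c := by nlinarith [mul_pos hb hc]
  have e1 : 0 ≤ (3 * a - 4 * b * c) * (8 * b * c - 3 * a) := by
    apply mul_nonneg k1
    nlinarith [mul_pos hb hc]
  have hb1 : (1:ℤ) ≤ b ^ 2 := by nlinarith
  have hc1 : (1:ℤ) ≤ c ^ 2 := by nlinarith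
  have e2 : 9 * b ^ 2 ≤ 9 * b ^ 2 * c ^ 2 := by
    nlinarith [mul_nonneg (sq_nonneg b) (sub_nonneg.mpr hc1)]
  have e3 : 18 * c ^ 2 ≤ 18 * b ^ 2 * c ^ 2 := by
    nlinarith [mul_nonneg (sq_nonneg c) (sub_nonneg.mpr hb1)]
  have e4 : (1:ℤ) ≤ b ^ 2 * c ^ 2 := by nlinarith
  nlinarith [e1, e2, e3, e4, h]

/-- Base case: if no mutation strictly decreases, the solution is `(1,1,1)`. -/
lemma deg8_base (a b c : ℤ) (ha : 0 < a) (hb : 0 < b) (hc : 0 < c)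
    (h : a ^ 2 + b ^ 2 + 2 * c ^ 2 = 4 * a * b * c)
    (hA : a ≤ 2 * b * c) (hB : b ≤ 2 * a * c) (hC : c ≤ a * b) :
    a = 1 ∧ b = 1 ∧ c = 1 := by
  rcases le_or_gt (2 * c ^ 2) (a ^ 2) with h1 | h1
  · rcases le_total b a with h2 | h2
    · exact absurd (deg8_caseA a b c ha hb hc h h1 h2 hA) (by simp)
    · have h1' : 2 * c ^ 2 ≤ b ^ 2 := by nlinarith
      exact absurd (deg8_caseA b a c hb ha hc (by linarith) h1' h2 (by linarith)) (by simp)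
  · rcases le_or_gt (2 * c ^ 2) (b ^ 2) with h2 | h2
    · have h2' : a ≤ b := by nlinarith
      exact absurd (deg8_caseA b a c hb ha hc (by linarith) h2 h2' (by linarith)) (by simp)
    · -- case C : a² < 2c², b² < 2c², c ≤ ab
      have k0 : 2 * (a * b) * c < 3 * c ^ 2 := by nlinarith
      have k1 : 2 * (a * b) < 3 * c := by
        nlinarith [mul_pos (mul_pos ha hb) hc]
      have habpos : 0 < a * b := mul_pos ha hb
      have f1 : 0 < (3 * c - 2 * a * b) * (4 * a * b - 3 * c) := by
        apply mul_pos (by linarith)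
        linarith
      by_cases ha2 : 2 ≤ a
      · exfalso
        have f2 : 9 * a ^ 2 ≤ 9 * a ^ 2 * b ^ 2 := by
          nlinarith [mul_nonneg (sq_nonneg a) (sub_nonneg.mpr (show (1:ℤ) ≤ b ^ 2 by nlinarith))]
        have f3 : 36 * b ^ 2 ≤ 9 * a ^ 2 * b ^ 2 := by
          nlinarith [mul_nonneg (sq_nonneg b) (sub_nonneg.mpr (show (4:ℤ) ≤ a ^ 2 by nlinarith))]
        have f4 : 0 < a ^ 2 * b ^ 2 := by positivity
        nlinarith [f1, f2, f3, f4, h]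
      · by_cases hb2 : 2 ≤ b
        · exfalso
          have f2 : 9 * b ^ 2 ≤ 9 * a ^ 2 * b ^ 2 := by
            nlinarith [mul_nonneg (sq_nonneg b) (sub_nonneg.mpr (show (1:ℤ) ≤ a ^ 2 by nlinarith))]
          have f3 : 36 * a ^ 2 ≤ 9 * a ^ 2 * b ^ 2 := by
            nlinarith [mul_nonneg (sq_nonneg a) (sub_nonneg.mpr (show (4:ℤ) ≤ b ^ 2 by nlinarith))]
          have f4 : 0 < a ^ 2 * b ^ 2 := by positivity
          nlinarith [f1, f2, f3, f4, h]
        · have ha1 : a = 1 := by omega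
          have hb1 : b = 1 := by omega
          subst ha1; subst hb1
          have hcle : c ≤ 1 := by nlinarith [h, sq_nonneg (c - 1)]
          exact ⟨rfl, rfl, by omega⟩

lemma deg8_aux (n : ℕ) : ∀ a b c : ℤ, (a + b + c).toNat ≤ n → 0 < a → 0 < b → 0 < c →
    a ^ 2 + b ^ 2 + 2 * c ^ 2 = 4 * a * b * c →
    Relation.ReflTransGen Deg8Mutation (1, 1, 1) (a, b, c) := by
  induction n with
  | zero => intro a b c hn ha hb hc h; omega
  | succ n ih =>
    intro a b c hn ha hb hc h
    by_cases hA : 2 * b * c < a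
    · have hm : a * (4 * b * c - a) = b ^ 2 + 2 * c ^ 2 := by linear_combination -h
      have ha' : 0 < 4 * b * c - a := by
        nlinarith [hm, mul_pos hb hb, mul_pos hc hc]
      have heq : (4 * b * c - a) ^ 2 + b ^ 2 + 2 * c ^ 2 = 4 * (4 * b * c - a) * b * c := by
        linear_combination h
      have hlt : 4 * b * c - a < a := by linarith
      have hr := ih (4 * b * c - a) b c (by omega) ha' hb hc heq
      refine hr.tail ?_
      left
      show (a, b, c) = (4 * b * c - (4 * b * c - a), b, c)
      rw [show 4 * b * c - (4 * b * c - a) = a from by ring]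
    · by_cases hB : 2 * a * c < b
      · have hm : b * (4 * a * c - b) = a ^ 2 + 2 * c ^ 2 := by linear_combination -h
        have hb' : 0 < 4 * a * c - b := by
          nlinarith [hm, mul_pos ha ha, mul_pos hc hc]
        have heq : a ^ 2 + (4 * a * c - b) ^ 2 + 2 * c ^ 2 = 4 * a * (4 * a * c - b) * c := by
          linear_combination h
        have hlt : 4 * a * c - b < b := by linarith
        have hr := ih a (4 * a * c - b) c (by omega) ha hb' hc heq
        refine hr.tail ?_
        right; left
        show (a, b, c) = (a, 4 * a * c - (4 * a * c - b), c)
        rw [show 4 * a * c - (4 * a * c - b) = b from by ring]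
      · by_cases hC : a * b < c
        · have hm : 2 * c * (2 * a * b - c) = a ^ 2 + b ^ 2 := by linear_combination -h
          have hc' : 0 < 2 * a * b - c := by
            nlinarith [hm, mul_pos ha ha, mul_pos hb hb]
          have heq : a ^ 2 + b ^ 2 + 2 * (2 * a * b - c) ^ 2 = 4 * a * b * (2 * a * b - c) := by
            linear_combination h
          have hlt : 2 * a * b - c < c := by linarith
          have hr := ih a b (2 * a * b - c) (by omega) ha hb hc' heq
          refine hr.tail ?_
          right; right
          show (a, b, c) = (a, b, 2 * a * b - (2 * a * b - c))
          rw [show 2 * a * b - (2 * a * b - c) = c from by ring]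
        · obtain ⟨h1, h2, h3⟩ := deg8_base a b c ha hb hc h (by linarith) (by linarith) (by linarith)
          subst h1; subst h2; subst h3
          exact Relation.ReflTransGen.refl

/-- Every positive solution of `a² + b² + 2c² = 4abc` is obtained from the
minimal solution `(1,1,1)` by a finite sequence of mutations. -/
theorem deg8_reachable (a b c : ℤ) (ha : 0 < a) (hb : 0 < b) (hc : 0 < c)
    (h : a ^ 2 + b ^ 2 + 2 * c ^ 2 = 4 * a * b * c) :
    Relation.ReflTransGen Deg8Mutation (1, 1, 1) (a, b, c) := by
  exact deg8_aux (a + b + c).toNat a b c le_rfl ha hb hc h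
end
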